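/- 'Minimal model programme' for 1-cycles, part 3 (Theorem 3.16.3, lifting of regular sequences): Let F be a regular one-dimensional tropical fan in ℝ^n with primitive generators v_1, …, v_q spanning ℝ^n and weights ω_1, …, ω_q. Then there exist D ≥ 1 and a surjective ℤ-linear map π_F : ℤ^n → ℤ^D exhibiting F as a direct sum of one-dimensional Bergman fans, with blocks I_1, …, I_r, such that: for every nonnegative TR function M on ℝ^n with M·F = Σ_i ω_i M(v_i) = 1, there exists a nonnegative TR function M' on ℝ^D with M = M' ∘ π_F (where π_F is extended to an ℝ-linear map ℝ^n → ℝ^D) and Σ_{t=1}^r ( Σ_{s ∈ I_t} M'(e_s) + M'(−Σ_{s ∈ I_t} e_s) ) = 1. -/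

import Mathlib

/-- Integer pairing of a functional `l ∈ (ℤⁿ)^∨` with a vector `x ∈ ℤⁿ`. -/
def dotZ {n : ℕ} (l x : Fin n → ℤ) : ℤ := ∑ j, l j * x j

/-- Value of the nonnegative tropical regular function `max(0, l₁, …, l_k)` at `x ∈ ℤⁿ`. -/
def tropEvalZ {n k : ℕ} (l : Fin k → Fin n → ℤ) (x : Fin n → ℤ) : ℤ :=
  Finset.univ.fold max 0 (fun s => dotZ (l s) x)

/-- A one-dimensional tropical fan in ℝⁿ: pairwise distinct primitive integer vectors
`v i` (the primitive generators of the rays) spanning ℝⁿ, with positive integer weights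
`w i`, subject to the balancing condition `∑ i, w i • v i = 0`. -/
structure TropFan1 (n q : ℕ) where
  v : Fin q → Fin n → ℤ
  w : Fin q → ℤ
  v_inj : Function.Injective v
  v_prim : ∀ i, Finset.univ.gcd (v i) = 1
  w_pos : ∀ i, 0 < w i
  balanced : ∑ i, w i • v i = 0
  spans : Submodule.span ℝ (Set.range fun i => fun j => ((v i j : ℝ))) = ⊤

/-- A gallery of `F` on the pair of distinct indices `(a, b)`. -/
def IsGallery {n q : ℕ} (F : TropFan1 n q) (a b : Fin q) (l : Fin n → ℤ) : Prop :=
  a ≠ b ∧ F.w a = 1 ∧ F.w b = 1 ∧ dotZ l (F.v a) = 1 ∧ dotZ l (F.v b) = -1 ∧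
    ∀ j, j ≠ a → j ≠ b → dotZ l (F.v j) = 0


/-- The surjective ℤ-linear map `x ↦ A.mulVec x : ℤⁿ → ℤᴺ` exhibits the fan `F`
as a direct sum of one-dimensional Bergman fans, with blocks `I_t = B⁻¹(t)` of the
partition of `Fin N` (blocks nonempty since `B` is surjective), ray index `a0 t`
playing the role of `a(t,0)` and ray indices `a1 s` (for `s ∈ I_t`, i.e. `B s = t`)
playing the role of `a(t,s)`; all these ray indices are pairwise distinct and have
weight `1`. -/
def ExhibitsBergman {n q : ℕ} (N r : ℕ) (F : TropFan1 n q)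
    (A : Matrix (Fin N) (Fin n) ℤ) (B : Fin N → Fin r)
    (a0 : Fin r → Fin q) (a1 : Fin N → Fin q) : Prop :=
  Function.Surjective (A.mulVec : (Fin n → ℤ) → (Fin N → ℤ)) ∧
  Function.Surjective B ∧
  Function.Injective a0 ∧ Function.Injective a1 ∧
  (∀ t s, a0 t ≠ a1 s) ∧
  (∀ t, F.w (a0 t) = 1) ∧ (∀ s, F.w (a1 s) = 1) ∧
  (∀ s : Fin N, A.mulVec (F.v (a1 s)) = Pi.single s 1) ∧
  (∀ t : Fin r, A.mulVec (F.v (a0 t)) = fun s => if B s = t then -1 else 0) ∧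
  (∀ j : Fin q, (∀ t, j ≠ a0 t) → (∀ s, j ≠ a1 s) → A.mulVec (F.v j) = 0)

/-- Value of the nonnegative tropical regular function `max(0, l_1, ..., l_k)` at a real
point `x` of ℝᵐ. -/
def tropEvalR {m k : ℕ} (l : Fin k → Fin m → ℤ) (x : Fin m → ℝ) : ℝ :=
  Finset.univ.fold max 0 (fun s => ∑ j, (l s j : ℝ) * x j)

namespace MMP3

lemma dotZ_neg {n : ℕ} (l x : Fin n → ℤ) : dotZ (-l) x = - dotZ l x := by
  simp [dotZ, Finset.sum_neg_distrib]

lemma dotZ_add {n : ℕ} (l m x : Fin n → ℤ) : dotZ (l + m) x = dotZ l x + dotZ m x := by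
  simp [dotZ, add_mul, Finset.sum_add_distrib]

lemma dotZ_sub {n : ℕ} (l m x : Fin n → ℤ) : dotZ (l - m) x = dotZ l x - dotZ m x := by
  simp [dotZ, sub_mul, Finset.sum_sub_distrib]

variable {n q : ℕ} (F : TropFan1 n q)

/-- functionals vanishing on all rays are zero, by the spanning condition -/
lemma dot_all_zero (l : Fin n → ℤ) (h : ∀ i, dotZ l (F.v i) = 0) : l = 0 := by
  set φ : (Fin n → ℝ) →ₗ[ℝ] ℝ :=
    { toFun := fun x => ∑ j, (l j : ℝ) * x j
      map_add' := by intro x y; simp [mul_add, Finset.sum_add_distrib]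
      map_smul' := by
        intro c x; simp only [Finset.mul_sum, RingHom.id_apply, Pi.smul_apply, smul_eq_mul]
        exact Finset.sum_congr rfl fun j _ => by ring }
  have hker : Submodule.span ℝ (Set.range fun i => fun j => ((F.v i j : ℝ))) ≤
      LinearMap.ker φ := by
    rw [Submodule.span_le]
    rintro x ⟨i, rfl⟩
    have h0 : ((dotZ l (F.v i) : ℤ) : ℝ) = 0 := by rw [h i]; simp
    simp only [SetLike.mem_coe, LinearMap.mem_ker]
    simpa [dotZ, φ] using h0
  rw [F.spans, top_le_iff] at hker
  have hφ : ∀ x : Fin n → ℝ, ∑ j, (l j : ℝ) * x j = 0 := by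
    intro x
    have : φ x = 0 := by rw [← LinearMap.mem_ker, hker]; trivial
    simpa [φ] using this
  funext j
  have := hφ (Pi.single j 1)
  simp [Pi.single_apply, mul_ite, Finset.sum_ite_eq'] at this
  exact_mod_cast this

lemma balance_dot (l : Fin n → ℤ) : ∑ i, F.w i * dotZ l (F.v i) = 0 := by
  have h := congrArg (fun x : Fin n → ℤ => dotZ l x) F.balanced
  simp only [dotZ, Finset.sum_apply, Pi.smul_apply, smul_eq_mul, Pi.zero_apply, mul_zero,
    Finset.sum_const_zero, Finset.mul_sum] at h
  rw [Finset.sum_comm] at h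
  rw [← h]
  refine Finset.sum_congr rfl fun i _ => ?_
  rw [dotZ, Finset.mul_sum]
  exact Finset.sum_congr rfl fun j _ => by ring

lemma gallery_symm {a b : Fin q} {l : Fin n → ℤ} (h : IsGallery F a b l) :
    IsGallery F b a (-l) := by
  obtain ⟨hne, ha, hb, hda, hdb, hoo⟩ := h
  refine ⟨hne.symm, hb, ha, ?_, ?_, fun j hj1 hj2 => ?_⟩
  · rw [dotZ_neg, hdb]; ring
  · rw [dotZ_neg, hda]
  · rw [dotZ_neg, hoo j hj2 hj1]; ring

lemma gallery_trans {a b c : Fin q} {l m : Fin n → ℤ} (hab : IsGallery F a b l)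
    (hbc : IsGallery F b c m) (hac : a ≠ c) : IsGallery F a c (l + m) := by
  obtain ⟨hne, ha, hb, hda, hdb, ho⟩ := hab
  obtain ⟨hne', hb', hc, hda', hdb', ho'⟩ := hbc
  refine ⟨hac, ha, hc, ?_, ?_, ?_⟩
  · rw [dotZ_add, hda, ho' a hne hac]; ring
  · rw [dotZ_add, hdb', ho c hac.symm hne'.symm]; ring
  · intro j hj1 hj2
    rcases eq_or_ne j b with rfl | hjb
    · rw [dotZ_add, hdb, hda']; ring
    · rw [dotZ_add, ho j hj1 hjb, ho' j hjb hj2]; ring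

lemma gallery_unique {a b : Fin q} {l l' : Fin n → ℤ} (h : IsGallery F a b l)
    (h' : IsGallery F a b l') : l = l' := by
  obtain ⟨hne, _, _, hda, hdb, ho⟩ := h
  obtain ⟨_, _, _, hda', hdb', ho'⟩ := h'
  have : l - l' = 0 := by
    apply dot_all_zero F
    intro i
    rw [dotZ_sub]
    rcases eq_or_ne i a with rfl | hia
    · rw [hda, hda']; ring
    rcases eq_or_ne i b with rfl | hib
    · rw [hdb, hdb']; ring
    · rw [ho i hia hib, ho' i hia hib]; ring
  funext j; have := congrFun this j; simp [sub_eq_zero] at this; exact this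

/-- the gallery equivalence relation -/
def GRel (i j : Fin q) : Prop := i = j ∨ ∃ l, IsGallery F i j l

lemma grel_refl (i : Fin q) : GRel F i i := Or.inl rfl

lemma grel_symm {i j : Fin q} (h : GRel F i j) : GRel F j i := by
  rcases h with rfl | ⟨l, hl⟩
  · exact Or.inl rfl
  · exact Or.inr ⟨-l, gallery_symm F hl⟩

lemma grel_trans {i j k : Fin q} (h : GRel F i j) (h' : GRel F j k) : GRel F i k := by
  rcases h with rfl | ⟨l, hl⟩
  · exact h'
  rcases h' with rfl | ⟨m, hm⟩
  · exact Or.inr ⟨l, hl⟩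
  rcases eq_or_ne i k with rfl | hik
  · exact Or.inl rfl
  · exact Or.inr ⟨l + m, gallery_trans F hl hm hik⟩

lemma mul_eq_one_split (x y : ℤ) (hx : 1 ≤ x) (hy : 0 ≤ y) (h : x * y = 1) :
    x = 1 ∧ y = 1 := by
  have hy0 : y ≠ 0 := by rintro rfl; simp at h
  have hy1 : 1 ≤ y := by omega
  have hx1 : x ≤ 1 := by nlinarith
  have hx' : x = 1 := le_antisymm hx1 hx
  subst hx'
  simp only [one_mul] at h
  exact ⟨rfl, h⟩

lemma mul_eq_negone_split (x y : ℤ) (hx : 1 ≤ x) (hy : y ≤ 0) (h : x * y = -1) :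
    x = 1 ∧ y = -1 := by
  have := mul_eq_one_split x (-y) hx (by omega) (by rw [mul_neg, h]; norm_num)
  exact ⟨this.1, by omega⟩

lemma tropEvalZ_nonneg {k : ℕ} (c : Fin k → Fin n → ℤ) (x : Fin n → ℤ) : 0 ≤ tropEvalZ c x :=
  (Finset.le_fold_max _).mpr (Or.inl le_rfl)

lemma dot_le_tropEvalZ {k : ℕ} (c : Fin k → Fin n → ℤ) (x : Fin n → ℤ) (s : Fin k) :
    dotZ (c s) x ≤ tropEvalZ c x :=
  (Finset.le_fold_max _).mpr (Or.inr ⟨s, Finset.mem_univ s, le_rfl⟩)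

lemma sum_eq_one_pick {ι : Type*} [DecidableEq ι] (s : Finset ι) (g : ι → ℤ) (hg : ∀ i ∈ s, 0 ≤ g i)
    (h : ∑ i ∈ s, g i = 1) : ∃ a ∈ s, g a = 1 ∧ ∀ j ∈ s, j ≠ a → g j = 0 := by
  by_cases hex : ∃ a ∈ s, 0 < g a
  · obtain ⟨a, ha, hpos⟩ := hex
    have herase : g a + ∑ j ∈ s.erase a, g j = 1 := by
      rw [Finset.add_sum_erase s g ha]; exact h
    have hnn : 0 ≤ ∑ j ∈ s.erase a, g j :=
      Finset.sum_nonneg fun j hj => hg j (Finset.mem_of_mem_erase hj)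
    have hga : g a = 1 := by omega
    have hz : ∑ j ∈ s.erase a, g j = 0 := by omega
    have hall := (Finset.sum_eq_zero_iff_of_nonneg
      (fun j hj => hg j (Finset.mem_of_mem_erase hj))).mp hz
    exact ⟨a, ha, hga, fun j hj hja => hall j (Finset.mem_erase.mpr ⟨hja, hj⟩)⟩
  · exfalso
    push_neg at hex
    have : ∑ i ∈ s, g i = 0 :=
      Finset.sum_eq_zero fun i hi => le_antisymm (hex i hi) (hg i hi)
    omega

lemma extract {k : ℕ} (c : Fin k → Fin n → ℤ)
    (h : ∑ i, F.w i * tropEvalZ c (F.v i) = 1) :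
    ∃ a, F.w a = 1 ∧ tropEvalZ c (F.v a) = 1 ∧ (∀ j, j ≠ a → tropEvalZ c (F.v j) = 0) ∧
      (∃ s b, IsGallery F a b (c s)) ∧
      (∀ s, c s = 0 ∨ ∃ b, IsGallery F a b (c s)) := by
  obtain ⟨a, -, hga, hgo⟩ := sum_eq_one_pick Finset.univ (fun i => F.w i * tropEvalZ c (F.v i))
    (fun i _ => mul_nonneg (F.w_pos i).le (tropEvalZ_nonneg c (F.v i))) h
  have hZo : ∀ j, j ≠ a → tropEvalZ c (F.v j) = 0 := by
    intro j hj
    have h0 := hgo j (Finset.mem_univ j) hj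
    have := (F.w_pos j).ne'
    exact (mul_eq_zero.mp h0).resolve_left this
  obtain ⟨hwa, hZa⟩ := mul_eq_one_split _ _ (F.w_pos a) (tropEvalZ_nonneg c (F.v a)) hga
  have hmain : ∀ s, c s = 0 ∨ ∃ b, IsGallery F a b (c s) := by
    intro s
    have hdle : ∀ j, j ≠ a → dotZ (c s) (F.v j) ≤ 0 := fun j hj =>
      (dot_le_tropEvalZ c (F.v j) s).trans_eq (hZo j hj)
    have hbal : ∑ j, F.w j * dotZ (c s) (F.v j) = 0 := balance_dot F (c s)
    have hdla : dotZ (c s) (F.v a) ≤ 1 := (dot_le_tropEvalZ c (F.v a) s).trans_eq hZa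
    rcases le_or_gt (dotZ (c s) (F.v a)) 0 with hda | hda
    · left
      have hnp : ∀ j ∈ Finset.univ, F.w j * dotZ (c s) (F.v j) ≤ 0 := by
        intro j _
        rcases eq_or_ne j a with rfl | hj
        · exact mul_nonpos_of_nonneg_of_nonpos (F.w_pos j).le hda
        · exact mul_nonpos_of_nonneg_of_nonpos (F.w_pos j).le (hdle j hj)
      have hall := (Finset.sum_eq_zero_iff_of_nonpos hnp).mp hbal
      apply dot_all_zero F
      intro j
      have h0 := hall j (Finset.mem_univ j)
      exact (mul_eq_zero.mp h0).resolve_left (F.w_pos j).ne'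
    · right
      have hda1 : dotZ (c s) (F.v a) = 1 := le_antisymm hdla hda
      have h2 : ∑ j ∈ Finset.univ.erase a, (-(F.w j * dotZ (c s) (F.v j))) = 1 := by
        have he : F.w a * dotZ (c s) (F.v a) +
            ∑ x ∈ Finset.univ.erase a, F.w x * dotZ (c s) (F.v x) = 0 := by
          rw [Finset.add_sum_erase Finset.univ
            (fun j => F.w j * dotZ (c s) (F.v j)) (Finset.mem_univ a)]
          exact hbal
        rw [hwa, hda1] at he
        rw [Finset.sum_neg_distrib]
        linarith
      obtain ⟨b, hbmem, hb1, hbo⟩ := sum_eq_one_pick _ _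
        (fun j hj => by
          have hj' : j ≠ a := (Finset.mem_erase.mp hj).1
          have := mul_nonpos_of_nonneg_of_nonpos (F.w_pos j).le (hdle j hj')
          omega) h2
      have hbne : b ≠ a := (Finset.mem_erase.mp hbmem).1
      have hwbdb : F.w b * dotZ (c s) (F.v b) = -1 := by omega
      have hwb := mul_eq_negone_split _ _ (F.w_pos b) (hdle b hbne) hwbdb
      refine ⟨b, hbne.symm, hwa, hwb.1, hda1, hwb.2, ?_⟩
      intro j hj1 hj2
      have := hbo j (Finset.mem_erase.mpr ⟨hj1, Finset.mem_univ j⟩) hj2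
      have hwj := (F.w_pos j).ne'
      have : F.w j * dotZ (c s) (F.v j) = 0 := by omega
      exact (mul_eq_zero.mp this).resolve_left hwj
  have hex : ∃ s b, IsGallery F a b (c s) := by
    by_contra hcon
    push_neg at hcon
    have hall : ∀ s, c s = 0 := by
      intro s
      rcases hmain s with h0 | ⟨b, hb⟩
      · exact h0
      · exact absurd hb (hcon s b)
    have : tropEvalZ c (F.v a) ≤ 0 := by
      rw [tropEvalZ]
      rw [Finset.fold_max_le]
      exact ⟨le_rfl, fun s _ => by simp [hall s, dotZ]⟩
    omega
  exact ⟨a, hwa, hZa, hZo, hex, hmain⟩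

open scoped Classical

/-- ray appears in some gallery -/
def InGal (i : Fin q) : Prop := ∃ j l, IsGallery F i j l

noncomputable def Cset : Finset (Fin q) := Finset.univ.filter (fun i => InGal F i)

noncomputable def cls (i : Fin q) : Finset (Fin q) :=
  Finset.univ.filter (fun j => GRel F i j)

lemma mem_cls {i j : Fin q} : j ∈ cls F i ↔ GRel F i j := by simp [cls]

lemma cls_nonempty (i : Fin q) : (cls F i).Nonempty :=
  ⟨i, (mem_cls F).mpr (grel_refl F i)⟩

noncomputable def rep (i : Fin q) : Fin q := (cls F i).min' (cls_nonempty F i)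

lemma cls_eq {i j : Fin q} (h : GRel F i j) : cls F i = cls F j := by
  ext x
  simp only [mem_cls]
  exact ⟨fun hx => grel_trans F (grel_symm F h) hx, fun hx => grel_trans F h hx⟩

lemma min'_congr {α : Type*} [LinearOrder α] {s t : Finset α} (h : s = t) (hs : s.Nonempty) :
    s.min' hs = t.min' (h ▸ hs) := by subst h; rfl

lemma grel_rep (i : Fin q) : GRel F i (rep F i) :=
  (mem_cls F).mp ((cls F i).min'_mem (cls_nonempty F i))

lemma rep_eq {i j : Fin q} (h : GRel F i j) : rep F i = rep F j :=
  min'_congr (cls_eq F h) _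

lemma rep_rep (i : Fin q) : rep F (rep F i) = rep F i := (rep_eq F (grel_rep F i)).symm

lemma mem_Cset {i : Fin q} : i ∈ Cset F ↔ InGal F i := by simp [Cset]

lemma ingal_of_grel {i j : Fin q} (h : GRel F i j) (hne : i ≠ j) : InGal F i := by
  rcases h with rfl | ⟨l, hl⟩
  · exact absurd rfl hne
  · exact ⟨j, l, hl⟩

lemma w_one_of_ingal {i : Fin q} (h : InGal F i) : F.w i = 1 := by
  obtain ⟨j, l, hl⟩ := h
  exact hl.2.1

noncomputable def R0 : Finset (Fin q) := (Cset F).filter (fun i => rep F i = i)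

noncomputable def ND : Finset (Fin q) := (Cset F).filter (fun i => ¬ rep F i = i)

lemma rep_mem_Cset {i : Fin q} (h : i ∈ Cset F) : rep F i ∈ Cset F := by
  rcases eq_or_ne (rep F i) i with he | hne
  · rwa [he]
  · exact (mem_Cset F).mpr (ingal_of_grel F (grel_symm F (grel_rep F i)) hne)

lemma rep_mem_R0 {i : Fin q} (h : i ∈ Cset F) : rep F i ∈ R0 F :=
  Finset.mem_filter.mpr ⟨rep_mem_Cset F h, rep_rep F i⟩

lemma ND_disj_R0 : Disjoint (ND F) (R0 F) := by
  rw [Finset.disjoint_left]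
  intro i hi hi'
  exact (Finset.mem_filter.mp hi).2 (Finset.mem_filter.mp hi').2

lemma ND_union_R0 : ND F ∪ R0 F = Cset F := by
  ext i
  simp only [Finset.mem_union, ND, R0, Finset.mem_filter]
  tauto

lemma exists_gallery_rep {i : Fin q} (h : i ∈ ND F) :
    ∃ l, IsGallery F i (rep F i) l := by
  obtain ⟨-, hne⟩ := Finset.mem_filter.mp h
  rcases grel_rep F i with he | hl
  · exact absurd he.symm hne
  · exact hl

noncomputable def galf (i : Fin q) : Fin n → ℤ :=
  if h : ∃ l, IsGallery F i (rep F i) l then h.choose else 0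

lemma galf_spec {i : Fin q} (h : i ∈ ND F) : IsGallery F i (rep F i) (galf F i) := by
  rw [galf, dif_pos (exists_gallery_rep F h)]
  exact (exists_gallery_rep F h).choose_spec

noncomputable def DD : ℕ := (ND F).card
noncomputable def rr : ℕ := (R0 F).card

noncomputable def a1 (s : Fin (DD F)) : Fin q := ((ND F).orderIsoOfFin rfl s : Fin q)
noncomputable def a0 (t : Fin (rr F)) : Fin q := ((R0 F).orderIsoOfFin rfl t : Fin q)

lemma a1_mem (s : Fin (DD F)) : a1 F s ∈ ND F := ((ND F).orderIsoOfFin rfl s).2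
lemma a0_mem (t : Fin (rr F)) : a0 F t ∈ R0 F := ((R0 F).orderIsoOfFin rfl t).2

lemma a1_inj : Function.Injective (a1 F) := fun s s' h =>
  ((ND F).orderIsoOfFin rfl).injective (Subtype.ext h)

lemma a0_inj : Function.Injective (a0 F) := fun t t' h =>
  ((R0 F).orderIsoOfFin rfl).injective (Subtype.ext h)

lemma a1_surj {i : Fin q} (h : i ∈ ND F) : ∃ s, a1 F s = i :=
  ⟨((ND F).orderIsoOfFin rfl).symm ⟨i, h⟩, by
    simp [a1]⟩

lemma a0_surj {i : Fin q} (h : i ∈ R0 F) : ∃ t, a0 F t = i :=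
  ⟨((R0 F).orderIsoOfFin rfl).symm ⟨i, h⟩, by
    simp [a0]⟩

lemma ND_subset_Cset : ND F ⊆ Cset F := Finset.filter_subset _ _
lemma R0_subset_Cset : R0 F ⊆ Cset F := Finset.filter_subset _ _

noncomputable def Bmap (s : Fin (DD F)) : Fin (rr F) :=
  ((R0 F).orderIsoOfFin rfl).symm
    ⟨rep F (a1 F s), rep_mem_R0 F (ND_subset_Cset F (a1_mem F s))⟩

lemma a0_Bmap (s : Fin (DD F)) : a0 F (Bmap F s) = rep F (a1 F s) := by
  simp [a0, Bmap]

lemma Bmap_eq_iff (s : Fin (DD F)) (t : Fin (rr F)) :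
    Bmap F s = t ↔ rep F (a1 F s) = a0 F t := by
  constructor
  · rintro rfl; exact (a0_Bmap F s).symm
  · intro h; apply a0_inj F; rw [a0_Bmap F s, h]

lemma Bmap_surj : Function.Surjective (Bmap F) := by
  intro t
  have h0 : a0 F t ∈ R0 F := a0_mem F t
  obtain ⟨hC, hrep⟩ := Finset.mem_filter.mp h0
  obtain ⟨j, l, hl⟩ := (mem_Cset F).mp hC
  have hgr : GRel F (a0 F t) j := Or.inr ⟨l, hl⟩
  have hne : a0 F t ≠ j := hl.1
  have hjC : j ∈ Cset F := (mem_Cset F).mpr ⟨_, _, gallery_symm F hl⟩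
  have hrepj : rep F j = a0 F t := by rw [← rep_eq F hgr, hrep]
  have hjND : j ∈ ND F := Finset.mem_filter.mpr ⟨hjC, by rw [hrepj]; exact hne⟩
  obtain ⟨s, hs⟩ := a1_surj F hjND
  exact ⟨s, (Bmap_eq_iff F s t).mpr (by rw [hs, hrepj])⟩

noncomputable def AF : Matrix (Fin (DD F)) (Fin n) ℤ :=
  Matrix.of (fun s j => galf F (a1 F s) j)

lemma mulVec_AF (x : Fin n → ℤ) (s : Fin (DD F)) :
    (AF F).mulVec x s = dotZ (galf F (a1 F s)) x := by
  simp [AF, Matrix.mulVec, dotProduct, dotZ]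

lemma rep_a1_ne (s : Fin (DD F)) : rep F (a1 F s) ≠ a1 F s :=
  (Finset.mem_filter.mp (a1_mem F s)).2

lemma rowdot (s : Fin (DD F)) (j : Fin q) : dotZ (galf F (a1 F s)) (F.v j) =
    if j = a1 F s then 1 else if j = rep F (a1 F s) then -1 else 0 := by
  obtain ⟨hne, -, -, hda, hdb, ho⟩ := galf_spec F (a1_mem F s)
  rcases eq_or_ne j (a1 F s) with rfl | h1
  · rw [if_pos rfl]; exact hda
  rcases eq_or_ne j (rep F (a1 F s)) with rfl | h2
  · rw [if_neg h1, if_pos rfl]; exact hdb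
  · rw [if_neg h1, if_neg h2]; exact ho j h1 h2

lemma AF_v_a1 (s' : Fin (DD F)) : (AF F).mulVec (F.v (a1 F s')) = Pi.single s' 1 := by
  funext s
  rw [mulVec_AF, rowdot]
  rcases eq_or_ne s' s with rfl | hss
  · rw [if_pos rfl, Pi.single_eq_same]
  · have hnr : a1 F s' ≠ rep F (a1 F s) := by
      intro h
      exact Finset.disjoint_left.mp (ND_disj_R0 F) (a1_mem F s')
        (h ▸ rep_mem_R0 F (ND_subset_Cset F (a1_mem F s)))
    rw [if_neg (fun h => hss (a1_inj F h)), if_neg hnr, Pi.single_eq_of_ne' hss]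

lemma AF_v_a0 (t : Fin (rr F)) :
    (AF F).mulVec (F.v (a0 F t)) = fun s => if Bmap F s = t then -1 else 0 := by
  funext s
  rw [mulVec_AF, rowdot]
  have h1 : a0 F t ≠ a1 F s := by
    intro h
    exact Finset.disjoint_left.mp (ND_disj_R0 F) (h ▸ a1_mem F s) (a0_mem F t)
  rw [if_neg h1]
  rcases eq_or_ne (rep F (a1 F s)) (a0 F t) with he | hne
  · rw [if_pos he.symm, if_pos ((Bmap_eq_iff F s t).mpr he)]
  · rw [if_neg (fun h => hne h.symm), if_neg (fun h => hne ((Bmap_eq_iff F s t).mp h))]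

lemma AF_v_zero {j : Fin q} (hj : j ∉ Cset F) : (AF F).mulVec (F.v j) = 0 := by
  funext s
  rw [mulVec_AF, rowdot]
  have h1 : j ≠ a1 F s := fun h => hj (h ▸ ND_subset_Cset F (a1_mem F s))
  have h2 : j ≠ rep F (a1 F s) := fun h =>
    hj (h ▸ R0_subset_Cset F (rep_mem_R0 F (ND_subset_Cset F (a1_mem F s))))
  rw [if_neg h1, if_neg h2]
  rfl

lemma AF_surj : Function.Surjective ((AF F).mulVec : (Fin n → ℤ) → (Fin (DD F) → ℤ)) := by
  intro y
  refine ⟨∑ s, y s • F.v (a1 F s), ?_⟩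
  have : (AF F).mulVec (∑ s, y s • F.v (a1 F s)) =
      ∑ s, y s • (AF F).mulVec (F.v (a1 F s)) := by
    rw [← Matrix.mulVecLin_apply, map_sum]
    exact Finset.sum_congr rfl fun s _ => by rw [map_smul, Matrix.mulVecLin_apply]
  rw [this]
  funext s'
  simp only [Finset.sum_apply, Pi.smul_apply, AF_v_a1, Pi.single_apply, smul_eq_mul,
    mul_ite, mul_one, mul_zero]
  simp [Finset.sum_ite_eq']

lemma dot_comb (u : Fin (DD F) → ℤ) (x : Fin n → ℤ) :
    dotZ (fun j => ∑ s', u s' * AF F s' j) x = ∑ s', u s' * dotZ (galf F (a1 F s')) x := by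
  simp only [dotZ, Finset.sum_mul]
  rw [Finset.sum_comm]
  refine Finset.sum_congr rfl fun s' _ => ?_
  rw [Finset.mul_sum]
  refine Finset.sum_congr rfl fun j _ => ?_
  simp only [AF, Matrix.of_apply]
  ring

noncomputable def psi (i : Fin q) : Fin (DD F) → ℤ :=
  if h : i ∈ ND F then Pi.single (((ND F).orderIsoOfFin rfl).symm ⟨i, h⟩) 1 else 0

lemma a1_symm_apply {i : Fin q} (h : i ∈ ND F) :
    a1 F (((ND F).orderIsoOfFin rfl).symm ⟨i, h⟩) = i := by
  simp [a1]

lemma psi_dot {i : Fin q} (hi : i ∈ Cset F) (j : Fin q) :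
    ∑ s', psi F i s' * dotZ (galf F (a1 F s')) (F.v j) =
      (if j = i then 1 else 0) - (if j = rep F i then 1 else 0) := by
  by_cases h : i ∈ ND F
  · rw [psi, dif_pos h]
    set σ : Fin (DD F) := ((ND F).orderIsoOfFin rfl).symm ⟨i, h⟩ with hσ
    have hsum : ∑ s', (Pi.single σ 1 : Fin (DD F) → ℤ) s' * dotZ (galf F (a1 F s')) (F.v j) =
        dotZ (galf F (a1 F σ)) (F.v j) := by
      simp [Pi.single_apply, ite_mul, Finset.sum_ite_eq]
    rw [hsum, rowdot, a1_symm_apply F h]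
    have hne : rep F i ≠ i := (Finset.mem_filter.mp h).2
    split_ifs with h1 h2 h3 <;> simp_all <;> omega
  · have hri : rep F i = i := by
      rcases Finset.mem_union.mp ((ND_union_R0 F) ▸ hi) with hmem | hmem
      · exact absurd hmem h
      · exact (Finset.mem_filter.mp hmem).2
    rw [psi, dif_neg h, hri]
    simp

lemma gallery_pullback {a b : Fin q} {l : Fin n → ℤ} (h : IsGallery F a b l) :
    l = fun j => ∑ s', (psi F a s' - psi F b s') * AF F s' j := by
  have ha : a ∈ Cset F := (mem_Cset F).mpr ⟨b, l, h⟩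
  have hb : b ∈ Cset F := (mem_Cset F).mpr ⟨a, -l, gallery_symm F h⟩
  have hrab : rep F a = rep F b := rep_eq F (Or.inr ⟨l, h⟩)
  obtain ⟨hne, -, -, hda, hdb, ho⟩ := h
  have key : ∀ j, dotZ (fun jj => ∑ s', (psi F a s' - psi F b s') * AF F s' jj) (F.v j)
      = dotZ l (F.v j) := by
    intro j
    rw [dot_comb]
    simp only [sub_mul, Finset.sum_sub_distrib]
    rw [psi_dot F ha j, psi_dot F hb j, hrab]
    rcases eq_or_ne j a with rfl | h1
    · rw [hda, if_pos rfl, if_neg hne]; ring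
    rcases eq_or_ne j b with rfl | h2
    · rw [hdb, if_neg h1, if_pos rfl]; ring
    · rw [ho j h1 h2, if_neg h1, if_neg h2]; ring
  have h0 : (fun jj => ∑ s', (psi F a s' - psi F b s') * AF F s' jj) - l = 0 :=
    dot_all_zero F _ (fun i => by rw [dotZ_sub, key i]; ring)
  funext j
  have := congrFun h0 j
  simp only [Pi.sub_apply, Pi.zero_apply, sub_eq_zero] at this
  exact this.symm

lemma ND_nonempty_of_gallery {a b : Fin q} {l : Fin n → ℤ} (h : IsGallery F a b l) :
    (ND F).Nonempty := by
  have ha : a ∈ Cset F := (mem_Cset F).mpr ⟨b, l, h⟩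
  have hb : b ∈ Cset F := (mem_Cset F).mpr ⟨a, -l, gallery_symm F h⟩
  have hrab : rep F a = rep F b := rep_eq F (Or.inr ⟨l, h⟩)
  rcases eq_or_ne (rep F a) a with he | hne
  · refine ⟨b, Finset.mem_filter.mpr ⟨hb, ?_⟩⟩
    rw [← hrab, he]
    exact h.1
  · exact ⟨a, Finset.mem_filter.mpr ⟨ha, hne⟩⟩

lemma tropEvalR_cast {k : ℕ} (c : Fin k → Fin n → ℤ) (x : Fin n → ℤ) :
    tropEvalR c (fun j => (x j : ℝ)) = ((tropEvalZ c x : ℤ) : ℝ) := by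
  have hm : ∀ a b : ℤ, ((max a b : ℤ) : ℝ) = max (a : ℝ) (b : ℝ) := fun a b => by
    exact_mod_cast Int.cast_max
  have hfold := Finset.fold_hom (s := (Finset.univ : Finset (Fin k))) (op := max)
    (b := (0:ℤ)) (f := fun s => dotZ (c s) x) (op' := max) (m := (Int.cast : ℤ → ℝ)) hm
  simp only [Int.cast_zero] at hfold
  rw [tropEvalR, tropEvalZ, ← hfold]
  apply Finset.fold_congr
  intro s _
  rw [dotZ]
  push_cast
  rfl

lemma map_mulVec_cast {N : ℕ} (A : Matrix (Fin N) (Fin n) ℤ) (x : Fin n → ℤ) :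
    (A.map (Int.cast : ℤ → ℝ)).mulVec (fun j => (x j : ℝ))
      = fun s => ((A.mulVec x s : ℤ) : ℝ) := by
  funext s
  simp only [Matrix.mulVec, dotProduct, Matrix.map_apply]
  push_cast
  rfl

lemma tropEvalR_factor {k : ℕ} (c : Fin k → Fin n → ℤ) (c' : Fin k → Fin (DD F) → ℤ)
    (hc : ∀ s, c s = fun j => ∑ s', c' s s' * AF F s' j) (x : Fin n → ℝ) :
    tropEvalR c x = tropEvalR c' (((AF F).map (Int.cast : ℤ → ℝ)).mulVec x) := by
  rw [tropEvalR, tropEvalR]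
  apply Finset.fold_congr
  intro s _
  rw [hc s]
  push_cast
  calc ∑ j, (∑ s', (c' s s' : ℝ) * (AF F s' j : ℝ)) * x j
      = ∑ j, ∑ s', ((c' s s' : ℝ) * (AF F s' j : ℝ)) * x j := by
        exact Finset.sum_congr rfl fun j _ => by rw [Finset.sum_mul]
    _ = ∑ s', ∑ j, ((c' s s' : ℝ) * (AF F s' j : ℝ)) * x j := Finset.sum_comm
    _ = ∑ s', (c' s s' : ℝ) * (((AF F).map (Int.cast : ℤ → ℝ)).mulVec x s') := by
        refine Finset.sum_congr rfl fun s' _ => ?_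
        simp only [Matrix.mulVec, dotProduct, Matrix.map_apply, Finset.mul_sum]
        exact Finset.sum_congr rfl fun j _ => by ring

lemma sum_blocks (φ : Fin q → ℝ) :
    ∑ t, ((∑ s ∈ Finset.univ.filter (fun s => Bmap F s = t), φ (a1 F s)) + φ (a0 F t))
      = ∑ i ∈ Cset F, φ i := by
  rw [Finset.sum_add_distrib]
  have h1 : ∑ t, ∑ s ∈ Finset.univ.filter (fun s => Bmap F s = t), φ (a1 F s)
      = ∑ s, φ (a1 F s) := Finset.sum_fiberwise _ _ _
  have h2 : ∑ s, φ (a1 F s) = ∑ i ∈ ND F, φ i := by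
    rw [← Finset.sum_coe_sort (ND F) φ]
    exact Fintype.sum_equiv ((ND F).orderIsoOfFin rfl).toEquiv _ _ (fun s => rfl)
  have h3 : ∑ t, φ (a0 F t) = ∑ i ∈ R0 F, φ i := by
    rw [← Finset.sum_coe_sort (R0 F) φ]
    exact Fintype.sum_equiv ((R0 F).orderIsoOfFin rfl).toEquiv _ _ (fun t => rfl)
  rw [h1, h2, h3, ← Finset.sum_union (ND_disj_R0 F), ND_union_R0]

end MMP3

set_option maxHeartbeats 1000000 in
open scoped Classical in
/-- 'Minimal model programme' for 1-cycles, part 3 (Theorem 3.16.3, lifting of regular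
sequences): a regular one-dimensional fan admits a projection `π_F` (given by the
matrix `AF`, with blocks `I_t = B⁻¹(t)`) exhibiting it as a direct sum of
one-dimensional Bergman fans, such that every nonnegative TR function `M` with
`M · F = 1` lifts from a nonnegative TR function `M'` downstairs whose intersection
number with the direct sum of Bergman fans equals `1`. -/
theorem mmp_one_cycles_part3 {n q : ℕ} (F : TropFan1 n q)
    (hreg : ∃ (k : ℕ) (c : Fin k → Fin n → ℤ), ∑ i, F.w i * tropEvalZ c (F.v i) = 1) :
    ∃ D : ℕ, 1 ≤ D ∧ ∃ (r : ℕ) (AF : Matrix (Fin D) (Fin n) ℤ)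
      (B : Fin D → Fin r) (a0 : Fin r → Fin q) (a1 : Fin D → Fin q),
      ExhibitsBergman D r F AF B a0 a1 ∧
      ∀ (M : (Fin n → ℝ) → ℝ) (k : ℕ) (c : Fin k → Fin n → ℤ),
        (∀ x, M x = tropEvalR c x) →
        (∑ i, (F.w i : ℝ) * M (fun j => (F.v i j : ℝ)) = 1) →
        ∃ (M' : (Fin D → ℝ) → ℝ) (k' : ℕ) (c' : Fin k' → Fin D → ℤ),
          (∀ y, M' y = tropEvalR c' y) ∧
          (∀ x : Fin n → ℝ, M x = M' ((AF.map (Int.cast : ℤ → ℝ)).mulVec x)) ∧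
          ∑ t : Fin r,
            ((∑ s ∈ Finset.univ.filter (fun s => B s = t), M' (Pi.single s 1)) +
              M' (fun s => if B s = t then (-1 : ℝ) else 0)) = 1 := by

  classical
  obtain ⟨k0, c0, h0⟩ := hreg
  obtain ⟨a', -, -, -, ⟨s0, b0, hg0⟩, -⟩ := MMP3.extract F c0 h0
  have hND : (MMP3.ND F).Nonempty := MMP3.ND_nonempty_of_gallery F hg0
  refine ⟨MMP3.DD F, Finset.card_pos.mpr hND, MMP3.rr F, MMP3.AF F, MMP3.Bmap F,
    MMP3.a0 F, MMP3.a1 F, ?_, ?_⟩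
  · refine ⟨MMP3.AF_surj F, MMP3.Bmap_surj F, MMP3.a0_inj F, MMP3.a1_inj F, ?_, ?_, ?_,
      MMP3.AF_v_a1 F, MMP3.AF_v_a0 F, ?_⟩
    · intro t s h
      have hmem := MMP3.a1_mem F s
      rw [← h] at hmem
      exact Finset.disjoint_left.mp (MMP3.ND_disj_R0 F) hmem (MMP3.a0_mem F t)
    · intro t
      exact MMP3.w_one_of_ingal F
        ((MMP3.mem_Cset F).mp (MMP3.R0_subset_Cset F (MMP3.a0_mem F t)))
    · intro s
      exact MMP3.w_one_of_ingal F
        ((MMP3.mem_Cset F).mp (MMP3.ND_subset_Cset F (MMP3.a1_mem F s)))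
    · intro j hj0 hj1
      have hjC : j ∉ MMP3.Cset F := by
        intro hjC
        rcases Finset.mem_union.mp ((MMP3.ND_union_R0 F) ▸ hjC) with hm | hm
        · obtain ⟨s, hs⟩ := MMP3.a1_surj F hm
          exact hj1 s hs.symm
        · obtain ⟨t, ht⟩ := MMP3.a0_surj F hm
          exact hj0 t ht.symm
      exact MMP3.AF_v_zero F hjC
  · intro M k c hM hsum
    have hMv : ∀ j, M (fun jj => (F.v j jj : ℝ)) = ((tropEvalZ c (F.v j) : ℤ) : ℝ) := by
      intro j; rw [hM, MMP3.tropEvalR_cast]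
    have hsumZ : ∑ i, F.w i * tropEvalZ c (F.v i) = 1 := by
      have hcast : ((∑ i, F.w i * tropEvalZ c (F.v i) : ℤ) : ℝ) = 1 := by
        push_cast
        rw [← hsum]
        exact Finset.sum_congr rfl fun i _ => by rw [hMv i]
      exact_mod_cast hcast
    obtain ⟨a, hwa, hZa, hZo, ⟨sbar, bbar, hgbar⟩, hmain⟩ := MMP3.extract F c hsumZ
    have haC : a ∈ MMP3.Cset F := (MMP3.mem_Cset F).mpr ⟨bbar, c sbar, hgbar⟩
    set c' : Fin k → Fin (MMP3.DD F) → ℤ := fun s =>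
      if h : ∃ b, IsGallery F a b (c s) then
        (fun s' => MMP3.psi F a s' - MMP3.psi F h.choose s') else 0 with hc'def
    have hc : ∀ s, c s = fun j => ∑ s', c' s s' * MMP3.AF F s' j := by
      intro s
      by_cases hh : ∃ b, IsGallery F a b (c s)
      · have : c' s = fun s' => MMP3.psi F a s' - MMP3.psi F hh.choose s' := by
          rw [hc'def]; simp only [dif_pos hh]
        rw [this]
        exact MMP3.gallery_pullback F hh.choose_spec
      · have h0 : c s = 0 := (hmain s).resolve_right hh
        have : c' s = 0 := by rw [hc'def]; simp only [dif_neg hh]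
        rw [h0, this]
        funext j
        simp
    refine ⟨tropEvalR c', k, c', fun y => rfl, ?_, ?_⟩
    · intro x
      rw [hM]
      exact MMP3.tropEvalR_factor F c c' hc x
    · have hval : ∀ j : Fin q,
          tropEvalR c' (fun s => (((MMP3.AF F).mulVec (F.v j) s : ℤ) : ℝ))
            = ((tropEvalZ c (F.v j) : ℤ) : ℝ) := by
        intro j
        rw [← MMP3.map_mulVec_cast (MMP3.AF F) (F.v j),
          ← MMP3.tropEvalR_factor F c c' hc, MMP3.tropEvalR_cast]
      have key1 : ∀ s, tropEvalR c' (Pi.single s 1)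
          = ((tropEvalZ c (F.v (MMP3.a1 F s)) : ℤ) : ℝ) := by
        intro s
        rw [← hval (MMP3.a1 F s)]
        congr 1
        funext s'
        rw [MMP3.AF_v_a1 F]
        rcases eq_or_ne s' s with rfl | hss
        · simp
        · simp [Pi.single_eq_of_ne hss, Pi.single_eq_of_ne' hss]
      have key0 : ∀ t, tropEvalR c' (fun s => if MMP3.Bmap F s = t then (-1:ℝ) else 0)
          = ((tropEvalZ c (F.v (MMP3.a0 F t)) : ℤ) : ℝ) := by
        intro t
        rw [← hval (MMP3.a0 F t)]
        congr 1
        funext s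
        rw [MMP3.AF_v_a0 F]
        by_cases h : MMP3.Bmap F s = t <;> simp [h]
      simp only [key1, key0]
      rw [MMP3.sum_blocks F (fun i => ((tropEvalZ c (F.v i) : ℤ) : ℝ))]
      rw [Finset.sum_eq_single_of_mem a haC (fun j _ hja => by rw [hZo j hja]; simp)]
      rw [hZa]
      simp
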